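/- arXiv:1304.2642 — 3 statements merged into one kernel-verified Lean document; each statement's English description precedes it below -/
import Mathlib

section
/- Let C be an abelian category, let P be a projective object of C, and let A = End_C(P). Let M be a finitely presented right A-module and suppose T(M) is an object of C corepresenting the functor X ↦ Hom_A(M, Hom_C(P,X)), with corepresenting bijections θ_X : Hom_C(T(M),X) ≅ Hom_A(M, Hom_C(P,X)) natural in X. Then the unit morphism η := θ_{T(M)}(id_{T(M)}) : M → Hom_C(P, T(M)) is an isomorphism of right A-modules. -/
open CategoryTheory CategoryTheory.Limits

universe v u

variable {C : Type u} [Category.{v} C] [Abelian C]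

/-- The right action of `A = End_C(P)` on `Hom_C(P, X)`, by precomposition. A right `A`-module
is a module over the opposite ring `Aᵐᵒᵖ`. -/
instance homSMulRight (P X : C) : SMul (End P)ᵐᵒᵖ (P ⟶ X) :=
  ⟨fun a f => a.unop ≫ f⟩

/-- `Hom_C(P, X)` is a right module over `A = End_C(P)`, i.e. a module over `Aᵐᵒᵖ`,
with the action given by precomposition; this module structure is functorial in `X`. -/
instance homModuleRight (P X : C) : Module (End P)ᵐᵒᵖ (P ⟶ X) where
  one_smul f := Category.id_comp f
  mul_smul a b f := Category.assoc a.unop b.unop f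
  smul_zero a := Limits.comp_zero
  smul_add a f g := Preadditive.comp_add _ _ _ _ _ _
  add_smul a b f := Preadditive.add_comp _ _ _ _ _ _
  zero_smul f := Limits.zero_comp

theorem stmt2_aux (P : C) [Projective P]
    (M : Type v) [AddCommGroup M] [Module (End P)ᵐᵒᵖ M]
    {n m : ℕ}
    (g : (Fin n → (End P)ᵐᵒᵖ) →ₗ[(End P)ᵐᵒᵖ] M) (hg : Function.Surjective g)
    (y : Fin m → (Fin n → (End P)ᵐᵒᵖ))
    (hy : Submodule.span (End P)ᵐᵒᵖ (Set.range y) = LinearMap.ker g)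
    (T : C) (θ : ∀ X : C, (T ⟶ X) ≃ (M →ₗ[(End P)ᵐᵒᵖ] (P ⟶ X)))
    (hθ : ∀ (X Y : C) (q : X ⟶ Y) (h : T ⟶ X) (z : M), θ Y (h ≫ q) z = θ X h z ≫ q) :
    Function.Bijective (θ T (𝟙 T)) := by
  classical
  haveI : HasFiniteBiproducts C := Abelian.hasFiniteBiproducts
  set η : M →ₗ[(End P)ᵐᵒᵖ] (P ⟶ T) := θ T (𝟙 T) with hη
  have hnat : ∀ (X : C) (h : T ⟶ X) (z : M), θ X h z = η z ≫ h := by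
    intro X h z
    have := hθ T X h (𝟙 T) z
    simpa using this
  -- the biproducts
  set Pn : C := ⨁ (fun _ : Fin n => P) with hPn
  set Pm : C := ⨁ (fun _ : Fin m => P) with hPm
  set hat : (Fin n → (End P)ᵐᵒᵖ) → (P ⟶ Pn) :=
    fun x => biproduct.lift (fun i => (x i).unop) with hhat
  set φ : Pm ⟶ Pn := biproduct.matrix (fun j i => (y j i).unop) with hφ
  set e : Fin n → (Fin n → (End P)ᵐᵒᵖ) := fun i => Pi.single i 1 with he
  have hsum : ∀ x : Fin n → (End P)ᵐᵒᵖ, (∑ i, x i • e i) = x := by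
    intro x
    funext i'
    simp [e, Pi.single_apply, smul_eq_mul, mul_ite, Finset.sum_ite_eq]
  set s : Pn ⟶ T := biproduct.desc (fun i => η (g (e i))) with hs
  have hsmulcomp : ∀ (X : C) (a : (End P)ᵐᵒᵖ) (f : P ⟶ X), a • f = a.unop ≫ f := fun _ _ _ => rfl
  have key : ∀ x, hat x ≫ s = η (g x) := by
    intro x
    rw [hhat, hs, biproduct.lift_desc]
    have : ∀ i : Fin n, (x i).unop ≫ η (g (e i)) = η (g (x i • e i)) := by
      intro i
      rw [map_smul, map_smul, hsmulcomp]
    rw [Finset.sum_congr rfl (fun i _ => this i), ← map_sum, ← map_sum, hsum]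
  have hatπ : ∀ x i, hat x ≫ biproduct.π _ i = (x i).unop := by
    intro x i
    simp [hhat]
  have hat_of : ∀ (w : P ⟶ Pn), hat (fun i => MulOpposite.op (w ≫ biproduct.π _ i)) = w := by
    intro w
    apply biproduct.hom_ext
    intro i
    simp [hhat]
  have hιφ : ∀ j, biproduct.ι (fun _ : Fin m => P) j ≫ φ = hat (y j) := by
    intro j
    rw [hφ, hhat, biproduct.ι_matrix]
  have hkery : ∀ j, g (y j) = 0 := by
    intro j
    have : y j ∈ LinearMap.ker g := by
      rw [← hy]; exact Submodule.subset_span ⟨j, rfl⟩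
    exact this
  have hφs : φ ≫ s = 0 := by
    apply biproduct.hom_ext'
    intro j
    rw [← Category.assoc, hιφ, key, hkery, map_zero, comp_zero]
  set K : C := cokernel φ with hK
  set π : Pn ⟶ K := cokernel.π φ with hπ
  -- additive properties of hat
  have hat_add : ∀ x x', hat (x + x') = hat x + hat x' := by
    intro x x'
    apply biproduct.hom_ext
    intro i
    simp [hhat]
  have hat_smul : ∀ (a : (End P)ᵐᵒᵖ) x, hat (a • x) = a.unop ≫ hat x := by
    intro a x
    apply biproduct.hom_ext
    intro i
    simp [hhat, End.mul_def]
  -- hat of kernel elements composed with π is 0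
  have hker0 : ∀ x ∈ LinearMap.ker g, hat x ≫ π = 0 := by
    intro x hx
    rw [← hy] at hx
    induction hx using Submodule.span_induction with
    | mem x hxm =>
      obtain ⟨j, rfl⟩ := hxm
      rw [← hιφ, Category.assoc, hπ, cokernel.condition, comp_zero]
    | zero =>
      have : hat 0 = 0 := by apply biproduct.hom_ext; intro i; simp [hhat]
      rw [this, zero_comp]
    | add a b _ _ ha hb =>
      rw [hat_add, Preadditive.add_comp, ha, hb, add_zero]
    | smul a x _ hx =>
      rw [hat_smul, Category.assoc, hx, comp_zero]
  -- the linear map v : M → Hom(P, K)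
  set v₀ : (Fin n → (End P)ᵐᵒᵖ) →ₗ[(End P)ᵐᵒᵖ] (P ⟶ K) :=
    { toFun := fun x => hat x ≫ π
      map_add' := by intro x x'; rw [hat_add, Preadditive.add_comp]
      map_smul' := by
        intro a x
        rw [hat_smul, RingHom.id_apply, hsmulcomp, Category.assoc] } with hv₀
  set ev := g.quotKerEquivOfSurjective hg with hev
  set v : M →ₗ[(End P)ᵐᵒᵖ] (P ⟶ K) :=
    ((LinearMap.ker g).liftQ v₀ (fun x hx => hker0 x hx)) ∘ₗ (ev.symm : M →ₗ[(End P)ᵐᵒᵖ] _)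
    with hv
  have hvg : ∀ x, v (g x) = hat x ≫ π := by
    intro x
    have h1 : ev.symm (g x) = Submodule.Quotient.mk x := by
      apply ev.injective
      rw [LinearEquiv.apply_symm_apply]
      rfl
    rw [hv]
    simp only [LinearMap.coe_comp, Function.comp_apply, LinearEquiv.coe_coe, h1]
    rfl
  set t : T ⟶ K := (θ K).symm v with ht
  set k : K ⟶ T := cokernel.desc φ s hφs with hk
  have hπk : π ≫ k = s := by rw [hπ, hk]; exact cokernel.π_desc _ _ _
  have hηt : ∀ z, η z ≫ t = v z := by
    intro z
    rw [← hnat K t z, ht, Equiv.apply_symm_apply]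
  have htk : t ≫ k = 𝟙 T := by
    apply (θ T).injective
    apply LinearMap.ext
    intro z
    obtain ⟨x, rfl⟩ := hg z
    rw [hθ K T k t, hnat K t, hηt, hvg, Category.assoc, hπk, key]
  have hst : s ≫ t = π := by
    apply biproduct.hom_ext'
    intro i
    have h1 : biproduct.ι (fun _ : Fin n => P) i ≫ s = η (g (e i)) := by
      rw [hs]; exact biproduct.ι_desc _ _
    have hhate : hat (e i) = biproduct.ι (fun _ : Fin n => P) i := by
      apply biproduct.hom_ext
      intro i'
      rw [hatπ]
      rw [biproduct.ι_π]
      by_cases h : i = i'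
      · subst h; simp [e]
      · simp [e, Pi.single_apply, Ne.symm h, h]
    rw [← Category.assoc, h1, hηt, hvg, hhate]
  have hkt : k ≫ t = 𝟙 K := by
    rw [← cancel_epi π, ← Category.assoc, hπk, hst, Category.comp_id]
  constructor
  · -- injectivity
    have hcore : ∀ z, η z = 0 → z = 0 := by
      intro z hz0
      obtain ⟨x, rfl⟩ := hg z
      have h0 : hat x ≫ π = 0 := by
        rw [← hst, ← Category.assoc, key, hz0, zero_comp]
      -- factor hat x through the image of φ
      set w1 : P ⟶ Abelian.image φ := kernel.lift (cokernel.π φ) (hat x) h0 with hw1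
      set w : P ⟶ Pm := Projective.factorThru w1 (Abelian.factorThruImage φ) with hw
      have hwφ : w ≫ φ = hat x := by
        have h2 : Abelian.factorThruImage φ ≫ Abelian.image.ι φ = φ := Abelian.image.fac φ
        calc w ≫ φ = w ≫ Abelian.factorThruImage φ ≫ Abelian.image.ι φ := by rw [h2]
          _ = w1 ≫ Abelian.image.ι φ := by
              rw [← Category.assoc, hw, Projective.factorThru_comp]
          _ = hat x := kernel.lift_ι _ _ _
      have hxspan : x = ∑ j, (MulOpposite.op (w ≫ biproduct.π (fun _ : Fin m => P) j)
          : (End P)ᵐᵒᵖ) • y j := by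
        funext i
        have c1 : (x i).unop = w ≫ φ ≫ biproduct.π (fun _ : Fin n => P) i := by
          rw [← Category.assoc, hwφ, hatπ]
        have c2 : φ ≫ biproduct.π (fun _ : Fin n => P) i
            = biproduct.desc (fun j => (y j i).unop) := by
          rw [hφ]; exact biproduct.matrix_π _ _
        have c3 : w = biproduct.lift (fun j => w ≫ biproduct.π (fun _ : Fin m => P) j) := by
          apply biproduct.hom_ext; intro j; simp
        have c4 : (x i).unop
            = ∑ j, (w ≫ biproduct.π (fun _ : Fin m => P) j) ≫ (y j i).unop := by
          rw [c1, c2]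
          conv_lhs => rw [c3]
          rw [biproduct.lift_desc]
        have : x i = MulOpposite.op ((x i).unop) := rfl
        rw [this, c4, Finset.op_sum]
        rw [Finset.sum_apply]
        apply Finset.sum_congr rfl
        intro j _
        rfl
      have hxk : x ∈ LinearMap.ker g := by
        rw [← hy, hxspan]
        exact Submodule.sum_mem _ fun j _ =>
          Submodule.smul_mem _ _ (Submodule.subset_span ⟨j, rfl⟩)
      exact hxk
    intro z1 z2 hz
    have h0 : η (z1 - z2) = 0 := by rw [map_sub, hz, sub_self]
    exact sub_eq_zero.mp (hcore _ h0)
  · -- surjectivity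
    intro g0
    set w' : P ⟶ Pn := Projective.factorThru (g0 ≫ t) π with hw'
    have hw'1 : w' ≫ π = g0 ≫ t := Projective.factorThru_comp _ _
    set x : Fin n → (End P)ᵐᵒᵖ :=
      fun i => MulOpposite.op (w' ≫ biproduct.π (fun _ : Fin n => P) i) with hx
    refine ⟨g x, ?_⟩
    have : hat x = w' := hat_of w'
    rw [← key x, this, ← hπk, ← Category.assoc, hw'1, Category.assoc, htk,
      Category.comp_id]

/-- Let `C` be an abelian category, `P` a projective object of `C` and
`A = End_C(P)`.  Let `M` be a finitely presented right `A`-module and suppose `T` is an object of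
`C` corepresenting the functor `X ↦ Hom_A(M, Hom_C(P, X))`, with corepresenting bijections
`θ X : Hom_C(T, X) ≃ Hom_A(M, Hom_C(P, X))` natural in `X`.  Then the unit morphism
`η := θ T (𝟙 T) : M → Hom_C(P, T)` is an isomorphism of right `A`-modules. -/
theorem stmt2 (P : C) [Projective P]
    (M : Type v) [AddCommGroup M] [Module (End P)ᵐᵒᵖ M]
    [Module.FinitePresentation (End P)ᵐᵒᵖ M]
    (T : C) (θ : ∀ X : C, (T ⟶ X) ≃ (M →ₗ[(End P)ᵐᵒᵖ] (P ⟶ X)))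
    (hθ : ∀ (X Y : C) (g : X ⟶ Y) (h : T ⟶ X) (z : M), θ Y (h ≫ g) z = θ X h z ≫ g) :
    Function.Bijective (θ T (𝟙 T)) := by
  classical
  obtain ⟨n, sfun, hsfun⟩ := Module.Finite.exists_fin (R := (End P)ᵐᵒᵖ) (M := M)
  set g : (Fin n → (End P)ᵐᵒᵖ) →ₗ[(End P)ᵐᵒᵖ] M :=
    { toFun := fun x => ∑ i, x i • sfun i
      map_add' := by intro x x'; simp [add_smul, Finset.sum_add_distrib]
      map_smul' := by intro a x; simp [mul_smul, Finset.smul_sum] } with hgdef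
  have hgsingle : ∀ i, g (Pi.single i 1) = sfun i := by
    intro i
    simp [hgdef, Pi.single_apply, ite_smul]
  have hg : Function.Surjective g := by
    rw [← LinearMap.range_eq_top]
    rw [eq_top_iff, ← hsfun]
    rw [Submodule.span_le]
    rintro _ ⟨i, rfl⟩
    exact ⟨Pi.single i 1, hgsingle i⟩
  have hker : (LinearMap.ker g).FG := Module.FinitePresentation.fg_ker g hg
  obtain ⟨m, y, hy⟩ := Submodule.fg_iff_exists_fin_generating_family.mp hker
  exact stmt2_aux P M g hg y hy T θ hθ
end

section
/- Let C be an abelian category, let P be a projective object of C which is moreover noetherian (its subobjects satisfy the ascending chain condition), and let A = End_C(P). Let E be a simple right A-module which is finitely presented over A, and let T(E) be an object of C corepresenting the functor X ↦ Hom_A(E, Hom_C(P,X)). Then T(E) is nonzero and has a unique maximal proper subobject; consequently T(E) has a simple quotient object X, unique up to isomorphism, and Hom_C(P,X) ≅ E as right A-modules. -/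
open CategoryTheory CategoryTheory.Limits

universe v u

variable {C : Type u} [Category.{v} C] [Abelian C]

lemma homSMul_def {P X : C} (a : (End P)ᵐᵒᵖ) (f : P ⟶ X) : a • f = a.unop ≫ f := rfl

/-- There exists an object `X₀` and a nonzero `A`-linear map `E →ₗ Hom(P, X₀)`. -/
lemma exists_nonzero_hom (P : C) [Projective P]
    (E : Type v) [AddCommGroup E] [Module (End P)ᵐᵒᵖ E]
    [IsSimpleModule (End P)ᵐᵒᵖ E] [Module.FinitePresentation (End P)ᵐᵒᵖ E] :
    ∃ (X₀ : C) (χ : E →ₗ[(End P)ᵐᵒᵖ] (P ⟶ X₀)), χ ≠ 0 := by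
  classical
  haveI : HasFiniteBiproducts C := Abelian.hasFiniteBiproducts
  set R := (End P)ᵐᵒᵖ
  haveI : Nontrivial E := IsSimpleModule.nontrivial R E
  obtain ⟨z, hz⟩ := exists_ne (0 : E)
  set ψ : R →ₗ[R] E := LinearMap.toSpanSingleton R E z with hψdef
  have hψs : Function.Surjective ψ :=
    IsSimpleModule.toSpanSingleton_surjective R hz
  obtain ⟨n, a, hs⟩ : ∃ (n : ℕ) (a : Fin n → R), Submodule.span R (Set.range a) = LinearMap.ker ψ :=
    Submodule.fg_iff_exists_fin_generating_family.mp (Module.FinitePresentation.fg_ker ψ hψs)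
  -- the morphism `φ : P^n ⟶ P` given by the generators of `ker ψ`
  set φ : (⨁ fun _ : Fin n => P) ⟶ P := biproduct.desc (fun i => (a i).unop) with hφdef
  refine ⟨cokernel φ, ?_⟩
  set π : P ⟶ cokernel φ := cokernel.π φ with hπdef
  have hπ : π ≠ 0 := by
    intro h0
    haveI : Epi φ := CategoryTheory.Abelian.epi_of_cokernel_π_eq_zero φ h0
    set v : P ⟶ (⨁ fun _ : Fin n => P) := Projective.factorThru (𝟙 P) φ with hvdef
    have hv : v ≫ φ = 𝟙 P := Projective.factorThru_comp _ _
    set w : Fin n → End P := fun j => (v ≫ biproduct.π (fun _ : Fin n => P) j : P ⟶ P) with hwdef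
    have hv2 : v ≫ φ = ∑ j : Fin n, (w j : P ⟶ P) ≫ ((a j).unop) := by
      conv_lhs => rw [show v = biproduct.lift (fun j => v ≫ biproduct.π _ j) from by
        ext j; simp]
      rw [hφdef, biproduct.lift_desc]
    have h1 : (𝟙 P : End P) = ∑ j : Fin n, ((a j).unop * w j) := by
      rw [← hv2.symm.trans hv]; rfl
    have hone : (1 : R) = ∑ j : Fin n, MulOpposite.op (w j) * a j := by
      calc (1 : R) = MulOpposite.op (𝟙 P : End P) := rfl
        _ = MulOpposite.op (∑ j : Fin n, ((a j).unop * w j)) := by rw [← h1]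
        _ = ∑ j : Fin n, MulOpposite.op ((a j).unop * w j) := by
              simpa only [MulOpposite.opAddEquiv_apply] using
                map_sum (MulOpposite.opAddEquiv (α := End P))
                  (fun j : Fin n => ((a j).unop * w j)) Finset.univ
        _ = ∑ j : Fin n, MulOpposite.op (w j) * a j := by
              refine Finset.sum_congr rfl (fun j _ => ?_)
              rw [MulOpposite.op_mul, MulOpposite.op_unop]
    have hmem : (1 : R) ∈ LinearMap.ker ψ := by
      rw [← hs, hone]
      refine Submodule.sum_mem _ (fun j _ => ?_)
      rw [← smul_eq_mul]
      exact Submodule.smul_mem _ _ (Submodule.subset_span (Set.mem_range_self j))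
    have : z = 0 := by
      have := (LinearMap.mem_ker).mp hmem
      rwa [hψdef, LinearMap.toSpanSingleton_apply, one_smul] at this
    exact hz this
  -- build `χ`
  set μ : R →ₗ[R] (P ⟶ cokernel φ) := LinearMap.toSpanSingleton R _ π with hμdef
  have hker : LinearMap.ker ψ ≤ LinearMap.ker μ := by
    rw [← hs, Submodule.span_le]
    rintro x ⟨i, rfl⟩
    simp only [SetLike.mem_coe, LinearMap.mem_ker, hμdef, LinearMap.toSpanSingleton_apply]
    have hx' : (a i).unop = biproduct.ι (fun _ : Fin n => P) i ≫ φ := by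
      rw [hφdef, biproduct.ι_desc]
    show (a i) • π = 0
    rw [homSMul_def, hx', Category.assoc, hπdef, cokernel.condition, comp_zero]
  set e := ψ.quotKerEquivOfSurjective hψs with hedef
  refine ⟨(Submodule.liftQ _ μ hker).comp (e.symm : E →ₗ[R] (R ⧸ LinearMap.ker ψ)), ?_⟩
  intro h0
  apply hπ
  have hez : e (Submodule.Quotient.mk 1) = z := by
    simp [hedef, LinearMap.quotKerEquivOfSurjective, LinearMap.quotKerEquivRange_apply_mk,
      hψdef, LinearMap.toSpanSingleton_apply]
  have hsymm : e.symm z = Submodule.Quotient.mk 1 := by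
    rw [← hez, LinearEquiv.symm_apply_apply]
  have := congrArg (fun (χ : E →ₗ[R] (P ⟶ cokernel φ)) => χ z) h0
  simp only [LinearMap.coe_comp, Function.comp_apply, LinearEquiv.coe_coe,
    LinearMap.zero_apply] at this
  rw [hsymm, Submodule.liftQ_apply, hμdef, LinearMap.toSpanSingleton_apply, one_smul] at this
  exact this

/-- Postcomposition as a linear map of right `End P`-modules. -/
def postcompHom {P X Y : C} (g : X ⟶ Y) : (P ⟶ X) →ₗ[(End P)ᵐᵒᵖ] (P ⟶ Y) where
  toFun f := f ≫ g
  map_add' f₁ f₂ := Preadditive.add_comp _ _ _ _ _ _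
  map_smul' a f := by
    simp only [RingHom.id_apply, homSMul_def, Category.assoc]


/-- Let `C` be an abelian category, `P` a projective object of `C` which is
moreover noetherian (its subobjects satisfy the ascending chain condition), and `A = End_C(P)`.
Let `E` be a simple right `A`-module which is finitely presented over `A`, and let `T` be an
object of `C` corepresenting the functor `X ↦ Hom_A(E, Hom_C(P, X))`.  Then `T` is nonzero and
has a unique maximal proper subobject; consequently `T` has a simple quotient object `X`, unique
up to isomorphism, and `Hom_C(P, X) ≅ E` as right `A`-modules. -/
theorem stmt4 (P : C) [Projective P] [WellFoundedGT (Subobject P)]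
    (E : Type v) [AddCommGroup E] [Module (End P)ᵐᵒᵖ E]
    [IsSimpleModule (End P)ᵐᵒᵖ E] [Module.FinitePresentation (End P)ᵐᵒᵖ E]
    (T : C) (θ : ∀ X : C, (T ⟶ X) ≃ (E →ₗ[(End P)ᵐᵒᵖ] (P ⟶ X)))
    (hθ : ∀ (X Y : C) (g : X ⟶ Y) (h : T ⟶ X) (z : E), θ Y (h ≫ g) z = θ X h z ≫ g) :
    ¬ IsZero T ∧
    (∃ S : Subobject T, S ≠ ⊤ ∧ ∀ S' : Subobject T, S' ≠ ⊤ → S' ≤ S) ∧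
    (∃ (X : C) (p : T ⟶ X), Epi p ∧ Simple X ∧
        Nonempty ((P ⟶ X) ≃ₗ[(End P)ᵐᵒᵖ] E) ∧
        ∀ (X' : C) (p' : T ⟶ X'), Epi p' → Simple X' → Nonempty (X ≅ X')) := by
    classical
  haveI : HasFiniteBiproducts C := Abelian.hasFiniteBiproducts
  haveI : HasBinaryBiproducts C := hasBinaryBiproducts_of_finite_biproducts C
  haveI : Nontrivial E := IsSimpleModule.nontrivial (End P)ᵐᵒᵖ E
  obtain ⟨z, hz⟩ := exists_ne (0 : E)
  -- the unit of the corepresentation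
  set η : E →ₗ[(End P)ᵐᵒᵖ] (P ⟶ T) := θ T (𝟙 T) with hηdef
  have hnat : ∀ (X : C) (h : T ⟶ X) (y : E), θ X h y = η y ≫ h := by
    intro X h y
    have := hθ T X h (𝟙 T) y
    rwa [Category.id_comp] at this
  have hθ0 : ∀ X : C, θ X 0 = 0 := by
    intro X
    apply LinearMap.ext
    intro y
    have := hθ T X 0 (𝟙 T) y
    rw [Category.id_comp] at this
    rw [this, comp_zero]
    rfl
  have hinj : ∀ {Q : C} (q : T ⟶ Q), q ≠ 0 → Function.Injective (θ Q q) := by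
    intro Q q hq
    refine (LinearMap.injective_or_eq_zero (θ Q q)).resolve_right (fun h => hq ?_)
    exact (θ Q).injective (h.trans (hθ0 Q).symm)
  -- the unit is nonzero
  have hηne : ∃ y : E, η y ≠ 0 := by
    obtain ⟨X₀, χ, hχ⟩ := exists_nonzero_hom P E
    obtain ⟨y, hy⟩ : ∃ y, χ y ≠ 0 := by
      by_contra h
      push_neg at h
      exact hχ (LinearMap.ext h)
    refine ⟨y, fun h0 => hy ?_⟩
    have : θ X₀ ((θ X₀).symm χ) y = η y ≫ (θ X₀).symm χ := hnat _ _ _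
    rw [Equiv.apply_symm_apply] at this
    rw [this, h0, Limits.zero_comp]
  have hηinj : Function.Injective η := by
    obtain ⟨y, hy⟩ := hηne
    refine (LinearMap.injective_or_eq_zero η).resolve_right (fun h => hy ?_)
    rw [h]; rfl
  set f : P ⟶ T := η z with hfdef
  have hf0 : f ≠ 0 := by
    intro h
    exact hz (hηinj (by rw [← hfdef, h, map_zero]))
  -- `f` is an epimorphism
  haveI hfepi : Epi f := by
    apply CategoryTheory.Abelian.epi_of_cokernel_π_eq_zero
    by_contra hq
    have h1 : θ _ (cokernel.π f) z = 0 := by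
      rw [hnat, ← hfdef, cokernel.condition]
    exact hz (hinj (cokernel.π f) hq (by rw [h1, map_zero]))
  -- the unit is surjective
  have hηsurj : Function.Surjective η := by
    intro g
    refine ⟨(MulOpposite.op (Projective.factorThru g f : End P) : (End P)ᵐᵒᵖ) • z, ?_⟩
    rw [map_smul, ← hfdef, homSMul_def, MulOpposite.unop_op, Projective.factorThru_comp]
  -- a subobject is proper iff it admits no nonzero maps from `P`
  have hprop1 : ∀ S' : Subobject T, S' ≠ ⊤ → ∀ h : P ⟶ (S' : C), h = 0 := by
    intro S' hS' h
    set q : T ⟶ cokernel S'.arrow := cokernel.π S'.arrow with hqdef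
    have hq : q ≠ 0 := by
      intro h0
      haveI : Epi S'.arrow := CategoryTheory.Abelian.epi_of_cokernel_π_eq_zero _ h0
      haveI : IsIso S'.arrow := isIso_of_mono_of_epi _
      exact hS' ((Subobject.isIso_arrow_iff_eq_top S').mp inferInstance)
    obtain ⟨y, hy⟩ := hηsurj (h ≫ S'.arrow)
    have h1 : θ _ q y = 0 := by
      rw [hnat, hy, Category.assoc, cokernel.condition, comp_zero]
    have h2 : y = 0 := hinj q hq (by rw [h1, map_zero])
    have h3 : h ≫ S'.arrow = 0 := by rw [← hy, h2, map_zero]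
    exact zero_of_comp_mono S'.arrow h3
  have hprop2 : ∀ S' : Subobject T, (∀ h : P ⟶ (S' : C), h = 0) → S' ≠ ⊤ := by
    intro S' hall h0
    subst h0
    haveI : IsIso ((⊤ : Subobject T).arrow) := inferInstance
    apply hf0
    have := hall (f ≫ inv ((⊤ : Subobject T).arrow))
    calc f = (f ≫ inv ((⊤ : Subobject T).arrow)) ≫ ((⊤ : Subobject T).arrow) := by
            rw [Category.assoc, IsIso.inv_hom_id, Category.comp_id]
      _ = 0 := by rw [this, Limits.zero_comp]
  -- `Subobject T` satisfies the ascending chain condition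
  haveI hwf : WellFoundedGT (Subobject T) := by
    set G : Subobject T → Subobject P :=
      fun S' => kernelSubobject (f ≫ cokernel.π S'.arrow) with hGdef
    have hGmono : Monotone G := by
      intro S₁ S₂ h12
      have hw : S₁.arrow ≫ cokernel.π S₂.arrow = 0 := by
        rw [← Subobject.ofLE_arrow h12, Category.assoc, cokernel.condition, comp_zero]
      have hfac : f ≫ cokernel.π S₂.arrow
          = (f ≫ cokernel.π S₁.arrow) ≫ cokernel.desc S₁.arrow (cokernel.π S₂.arrow) hw := by
        rw [Category.assoc, cokernel.π_desc]
      rw [hGdef]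
      dsimp only
      rw [hfac]
      exact kernelSubobject_comp_le _ _
    have hGrefl : ∀ S₁ S₂ : Subobject T, G S₂ ≤ G S₁ → S₂ ≤ S₁ := by
      intro S₁ S₂ hle
      set fst := pullback.fst S₂.arrow f with hfst
      set snd := pullback.snd S₂.arrow f with hsnd
      haveI : Epi fst := inferInstance
      have hcond : fst ≫ S₂.arrow = snd ≫ f := pullback.condition
      have h1 : snd ≫ (f ≫ cokernel.π S₂.arrow) = 0 := by
        rw [← Category.assoc, ← hcond, Category.assoc, cokernel.condition, comp_zero]
      have h2 : (G S₂).Factors snd := kernelSubobject_factors _ _ h1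
      have h3 : (G S₁).Factors snd := Subobject.factors_of_le _ hle h2
      have h4 : snd ≫ (f ≫ cokernel.π S₁.arrow) = 0 := by
        rw [← Subobject.factorThru_arrow _ _ h3, Category.assoc,
          kernelSubobject_arrow_comp, comp_zero]
      have h5 : fst ≫ (S₂.arrow ≫ cokernel.π S₁.arrow) = 0 := by
        rw [← Category.assoc, hcond, Category.assoc, h4]
      have h6 : S₂.arrow ≫ cokernel.π S₁.arrow = 0 := by
        rwa [← cancel_epi fst, comp_zero]
      -- `S₂ ≤ ker (cokernel.π S₁.arrow) ≤ S₁`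
      have h7 : S₂ ≤ kernelSubobject (cokernel.π S₁.arrow) := le_kernelSubobject _ _ h6
      have h8 : kernelSubobject (cokernel.π S₁.arrow) ≤ S₁ := by
        refine Subobject.le_of_comm
          (CategoryTheory.Abelian.monoLift S₁.arrow
            ((kernelSubobject (cokernel.π S₁.arrow)).arrow) (kernelSubobject_arrow_comp _)) ?_
        exact CategoryTheory.Abelian.monoLift_comp _ _ _
      exact le_trans h7 h8
    have hGstrict : StrictMono G := by
      intro S₁ S₂ h12
      rcases lt_iff_le_not_ge.mp h12 with ⟨hle, hnle⟩
      exact lt_iff_le_not_ge.mpr ⟨hGmono hle, fun h => hnle (hGrefl S₁ S₂ h)⟩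
    exact hGstrict.wellFoundedGT
  -- the set of "proper" subobjects
  set Z : Set (Subobject T) := {S' | ∀ h : P ⟶ (S' : C), h = 0} with hZdef
  have hbot : (⊥ : Subobject T) ∈ Z := by
    intro h
    exact ((isZero_zero C).of_iso (Subobject.botCoeIsoZero)).eq_zero_of_tgt h
  -- `Z` is closed under the join operation
  have hjoin : ∀ S₁ ∈ Z, ∀ S₂ ∈ Z,
      S₁ ≤ imageSubobject (biprod.desc S₁.arrow S₂.arrow) ∧
      S₂ ≤ imageSubobject (biprod.desc S₁.arrow S₂.arrow) ∧
      imageSubobject (biprod.desc S₁.arrow S₂.arrow) ∈ Z := by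
    intro S₁ h₁ S₂ h₂
    set d : ((S₁ : C) ⊞ (S₂ : C)) ⟶ T := biprod.desc S₁.arrow S₂.arrow with hddef
    refine ⟨?_, ?_, ?_⟩
    · refine Subobject.le_of_comm (biprod.inl ≫ factorThruImageSubobject d) ?_
      rw [Category.assoc, imageSubobject_arrow_comp, hddef, biprod.inl_desc]
    · refine Subobject.le_of_comm (biprod.inr ≫ factorThruImageSubobject d) ?_
      rw [Category.assoc, imageSubobject_arrow_comp, hddef, biprod.inr_desc]
    · intro h
      set w := Projective.factorThru h (factorThruImageSubobject d) with hwdef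
      have hw : w ≫ factorThruImageSubobject d = h := Projective.factorThru_comp _ _
      have hw0 : w = 0 := by
        apply biprod.hom_ext
        · rw [Limits.zero_comp]; exact h₁ _
        · rw [Limits.zero_comp]; exact h₂ _
      rw [← hw, hw0, Limits.zero_comp]
  -- a maximal element of `Z`
  obtain ⟨m, hmZ, hmax⟩ := (IsWellFounded.wf (r := ((· > ·) : Subobject T → Subobject T → Prop))).has_min Z ⟨⊥, hbot⟩
  have hmtop : m ≠ ⊤ := hprop2 m hmZ
  have hmmax : ∀ S' : Subobject T, S' ≠ ⊤ → S' ≤ m := by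
    intro S' hS'
    have hS'Z : S' ∈ Z := hprop1 S' hS'
    obtain ⟨hm1, hm2, hm3⟩ := hjoin m hmZ S' hS'Z
    have : imageSubobject (biprod.desc m.arrow S'.arrow) = m := by
      by_contra hne
      exact hmax _ hm3 (lt_of_le_of_ne hm1 (Ne.symm hne))
    rw [← this]
    exact hm2
  -- a general helper: the target of a zero epimorphism is a zero object
  have isZero_of_epi_zero : ∀ {A B : C} (e : A ⟶ B), Epi e → e = 0 → IsZero B := by
    intro A B e he h0
    rw [IsZero.iff_id_eq_zero]
    haveI := he
    rw [← cancel_epi e, Category.comp_id, comp_zero]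
    exact h0
  -- the simple quotient
  set Q : C := cokernel m.arrow with hQdef
  set p : T ⟶ Q := cokernel.π m.arrow with hpdef
  have hp0 : p ≠ 0 := by
    intro h0
    haveI : Epi m.arrow := CategoryTheory.Abelian.epi_of_cokernel_π_eq_zero _ h0
    haveI : IsIso m.arrow := isIso_of_mono_of_epi _
    exact hmtop ((Subobject.isIso_arrow_iff_eq_top m).mp inferInstance)
  haveI hpepi : Epi p := by rw [hpdef]; infer_instance
  -- `Q` is simple
  haveI hQsimple : Simple Q := by
    constructor
    intro Y i hmono
    refine ⟨fun hiso h0 => ?_, fun hne => ?_⟩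
    · haveI := hiso
      exact hp0 ((isZero_of_epi_zero i inferInstance h0).eq_zero_of_tgt p)
    · set fst := pullback.fst i p with hfstdef
      set snd := pullback.snd i p with hsnddef
      haveI : Epi fst := inferInstance
      haveI : Mono snd := inferInstance
      by_cases htop : Subobject.mk snd = ⊤
      · haveI : IsIso snd := (Subobject.isIso_iff_mk_eq_top snd).mpr htop
        have heq : p = (inv snd ≫ fst) ≫ i := by
          rw [Category.assoc, pullback.condition, ← Category.assoc, IsIso.inv_hom_id,
            Category.id_comp]
        haveI : Epi ((inv snd ≫ fst) ≫ i) := by rw [← heq]; infer_instance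
        haveI : Epi i := epi_of_epi (inv snd ≫ fst) i
        exact isIso_of_mono_of_epi i
      · exfalso
        have hle : Subobject.mk snd ≤ m := hmmax _ htop
        have hfac : Subobject.ofMkLE snd m hle ≫ m.arrow = snd := Subobject.ofMkLE_arrow hle
        have hmp : m.arrow ≫ p = 0 := cokernel.condition m.arrow
        have h1 : snd ≫ p = 0 := by
          rw [← hfac, Category.assoc, hmp, comp_zero]
        have h2 : fst ≫ i = 0 := by rw [pullback.condition, h1]
        apply hne
        rw [← cancel_epi fst, h2, comp_zero]
  -- the isomorphism `Hom(P, Q) ≅ E`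
  have hbij : Function.Bijective ((postcompHom (P := P) p).comp η) := by
    constructor
    · intro y₁ y₂ hyy
      exact hinj p hp0 ((hnat Q p y₁).trans (hyy.trans (hnat Q p y₂).symm))
    · intro g
      obtain ⟨y, hy⟩ := hηsurj (Projective.factorThru g p)
      refine ⟨y, ?_⟩
      show η y ≫ p = g
      rw [hy, Projective.factorThru_comp]
  refine ⟨fun h => hf0 (h.eq_zero_of_tgt f), ⟨m, hmtop, hmmax⟩, Q, p, hpepi, hQsimple,
    ⟨(LinearEquiv.ofBijective _ hbij).symm⟩, ?_⟩
  -- uniqueness of the simple quotient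
  intro X' p' hepi' hsimple'
  haveI := hepi'
  haveI := hsimple'
  have hX'nz : ¬ IsZero X' := Simple.not_isZero X'
  have hc : m.arrow ≫ p' = 0 := by
    by_cases himg : image.ι (m.arrow ≫ p') = 0
    · rw [← image.fac (m.arrow ≫ p'), himg, comp_zero]
    · exfalso
      haveI : IsIso (image.ι (m.arrow ≫ p')) := isIso_of_mono_of_nonzero himg
      haveI : Epi (m.arrow ≫ p') := by
        rw [← image.fac (m.arrow ≫ p')]
        exact epi_comp _ _
      have hall : ∀ g : P ⟶ X', g = 0 := by
        intro g
        have h1 := hmZ (Projective.factorThru g (m.arrow ≫ p'))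
        rw [← Projective.factorThru_comp g (m.arrow ≫ p'), h1, Limits.zero_comp]
      exact hX'nz (isZero_of_epi_zero (f ≫ p') (epi_comp _ _) (hall _))
  set r : Q ⟶ X' := cokernel.desc m.arrow p' hc with hrdef
  have hpr : p ≫ r = p' := by rw [hrdef, hpdef]; exact cokernel.π_desc _ _ _
  have hr0 : r ≠ 0 := by
    intro h0
    have hz' : p' = 0 := by rw [← hpr, h0, comp_zero]
    exact hX'nz (isZero_of_epi_zero p' hepi' hz')
  haveI hrepi : Epi r := epi_of_epi_fac hpr
  haveI hrmono : Mono r := by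
    by_cases hk : kernel.ι r = 0
    · exact CategoryTheory.Abelian.mono_of_kernel_ι_eq_zero _ hk
    · exfalso
      haveI : IsIso (kernel.ι r) := isIso_of_mono_of_nonzero hk
      apply hr0
      calc r = inv (kernel.ι r) ≫ (kernel.ι r ≫ r) := by
              rw [← Category.assoc, IsIso.inv_hom_id, Category.id_comp]
        _ = 0 := by rw [kernel.condition, comp_zero]
  haveI : IsIso r := isIso_of_mono_of_epi r
  exact ⟨asIso r⟩
end

section
/- Let C be an abelian category, let P be a noetherian projective object of C, and let A = End_C(P); assume that A is right noetherian. Then the assignment X ↦ Hom_C(P,X) induces a bijection from the set of isomorphism classes of simple objects X of C satisfying Hom_C(P,X) ≠ 0 onto the set of isomorphism classes of simple right A-modules. -/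
open CategoryTheory CategoryTheory.Limits

universe v u

variable {C : Type u} [Category.{v} C] [Abelian C]

/-- The type of simple objects `X` of `C` with `Hom_C(P, X) ≠ 0`. -/
def SimpleObjsWithHom (P : C) : Type u :=
  {X : C // Simple X ∧ ∃ f : P ⟶ X, f ≠ 0}

/-- Isomorphism classes: two such simple objects are identified when they are
isomorphic in `C`. -/
def simpleObjsSetoid (P : C) : Setoid (SimpleObjsWithHom P) where
  r X Y := Nonempty (X.1 ≅ Y.1)
  iseqv := ⟨fun X => ⟨Iso.refl X.1⟩, fun ⟨e⟩ => ⟨e.symm⟩, fun ⟨e⟩ ⟨e'⟩ => ⟨e.trans e'⟩⟩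

/-- The type of simple right `A`-modules, for `A = End_C(P)`
(i.e. simple modules over `Aᵐᵒᵖ`). -/
def SimpleRightMods (P : C) :=
  {M : ModuleCat.{v} (End P)ᵐᵒᵖ // IsSimpleModule (End P)ᵐᵒᵖ M}

/-- Isomorphism classes: two simple right `A`-modules are identified when they are
isomorphic as right `A`-modules. -/
def simpleRightModsSetoid (P : C) : Setoid (SimpleRightMods P) where
  r M N := Nonempty (M.1 ≃ₗ[(End P)ᵐᵒᵖ] N.1)
  iseqv := ⟨fun M => ⟨LinearEquiv.refl _ _⟩, fun ⟨e⟩ => ⟨e.symm⟩, fun ⟨e⟩ ⟨e'⟩ => ⟨e.trans e'⟩⟩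

/-!
`Hom(P, -)` sends a simple `X` with a nonzero `f : P ⟶ X` to a simple module: `f` is an
epimorphism, so every `g : P ⟶ X` lifts through it by projectivity. Two simple objects with
isomorphic modules are isomorphic: if `f : P ⟶ X` and `g : P ⟶ Y` have the same annihilator in
`End P`, then `g` kills `ker f` and descends to a nonzero, hence invertible, map `X ⟶ Y`.
Conversely, a simple module is `A ⧸ I` for a maximal right ideal `I`, finitely generated since `A`
is right noetherian, so `I` is the annihilator of the cokernel of a map `Pⁿ ⟶ P`. As `P` is
noetherian, the kernel of that cokernel lies in a maximal proper subobject `K`, and `P ⧸ K` is a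
simple object whose module is `A ⧸ I`.
-/

open MulOpposite

section

variable {P : C}

theorem mem_torsionOf_iff_comp_eq_zero {X : C} (a : (End P)ᵐᵒᵖ) (f : P ⟶ X) :
    a ∈ Ideal.torsionOf (End P)ᵐᵒᵖ (P ⟶ X) f ↔ a.unop ≫ f = 0 := Iff.rfl

theorem toSpanSingleton_surjective_of_epi [Projective P] {X : C} (f : P ⟶ X) [Epi f] :
    Function.Surjective (LinearMap.toSpanSingleton (End P)ᵐᵒᵖ (P ⟶ X) f) :=
  fun g => ⟨op (Projective.factorThru g f), Projective.factorThru_comp g f⟩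

theorem isSimpleModule_hom_of_ne_zero [Projective P] {X : C} [Simple X] {f : P ⟶ X}
    (hf : f ≠ 0) : IsSimpleModule (End P)ᵐᵒᵖ (P ⟶ X) :=
  isSimpleModule_iff_toSpanSingleton_surjective.mpr ⟨⟨f, 0, hf⟩, fun g hg =>
    have := epi_of_nonzero_to_simple hg
    toSpanSingleton_surjective_of_epi g⟩

noncomputable def homLinearEquivQuotTorsionOf [Projective P] {X : C} (f : P ⟶ X) [Epi f] :
    (P ⟶ X) ≃ₗ[(End P)ᵐᵒᵖ] (End P)ᵐᵒᵖ ⧸ Ideal.torsionOf (End P)ᵐᵒᵖ (P ⟶ X) f :=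
  (LinearMap.quotKerEquivOfSurjective _ (toSpanSingleton_surjective_of_epi f)).symm

theorem nonempty_iso_of_torsionOf_le [Projective P] {X Y : C} [Simple X] [Simple Y]
    {f : P ⟶ X} {g : P ⟶ Y} (hf : f ≠ 0) (hg : g ≠ 0)
    (h : Ideal.torsionOf (End P)ᵐᵒᵖ (P ⟶ X) f ≤ Ideal.torsionOf (End P)ᵐᵒᵖ (P ⟶ Y) g) :
    Nonempty (X ≅ Y) := by
  have : Epi f := epi_of_nonzero_to_simple hf
  -- Otherwise `kernel.ι f ≫ g` is epi, and lifting `g` through it gives an endomorphism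
  -- of `P` killed by `f` but not by `g`.
  have hker : kernel.ι f ≫ g = 0 := by
    by_contra hne
    have : Epi (kernel.ι f ≫ g) := epi_of_nonzero_to_simple hne
    have hlift := h ((mem_torsionOf_iff_comp_eq_zero
      (op (Projective.factorThru g (kernel.ι f ≫ g) ≫ kernel.ι f)) f).mpr (by simp))
    rw [mem_torsionOf_iff_comp_eq_zero, unop_op, Category.assoc,
      Projective.factorThru_comp] at hlift
    exact hg hlift
  have hfac : f ≫ Abelian.epiDesc f g hker = g := Abelian.comp_epiDesc f g hker
  have hdesc : Abelian.epiDesc f g hker ≠ 0 := fun h0 => hg (by rw [← hfac, h0, comp_zero])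
  have := isIso_of_hom_simple hdesc
  exact ⟨asIso (Abelian.epiDesc f g hker)⟩

theorem nonempty_iso_of_linearEquiv [Projective P] {X Y : C} [Simple X] [Simple Y] {f : P ⟶ X}
    (hf : f ≠ 0) (e : (P ⟶ X) ≃ₗ[(End P)ᵐᵒᵖ] (P ⟶ Y)) : Nonempty (X ≅ Y) :=
  nonempty_iso_of_torsionOf_le hf (e.map_ne_zero_iff.mpr hf) fun a ha => by
    rw [Ideal.mem_torsionOf_iff] at ha ⊢
    rw [← map_smul, ha, map_zero]

theorem comp_cokernel_π_eq_zero_of_factors {Z : C} {K : Subobject P} {h : Z ⟶ P}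
    (hK : K.Factors h) : h ≫ cokernel.π K.arrow = 0 := by
  rw [← K.factorThru_arrow h hK, Category.assoc, cokernel.condition, comp_zero]

theorem cokernel_π_ne_zero_of_ne_top {K : Subobject P} (hK : K ≠ ⊤) : cokernel.π K.arrow ≠ 0 :=
  fun h =>
    have := Abelian.epi_of_cokernel_π_eq_zero _ h
    hK ((Subobject.isIso_arrow_iff_eq_top K).mp (isIso_of_mono_of_epi _))

theorem simple_cokernel_of_isCoatom {K : Subobject P} (hK : IsCoatom K) :
    Simple (cokernel K.arrow) where
  mono_isIso_iff_nonzero {W} f _ := by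
    have hρ : cokernel.π K.arrow ≠ 0 := cokernel_π_ne_zero_of_ne_top hK.1
    constructor
    · rintro _ rfl
      rw [← Category.comp_id (cokernel.π K.arrow), ← IsIso.inv_hom_id (0 : W ⟶ _), comp_zero,
        comp_zero] at hρ
      exact hρ rfl
    · intro hf
      set L := (Subobject.pullback (cokernel.π K.arrow)).obj (Subobject.mk f)
      have hKL : K ≤ L := Subobject.le_of_factors <| (pullback_factors_iff _ _ _).mpr
        (by rw [cokernel.condition]; exact Subobject.factors_zero)
      rcases hKL.lt_or_eq with hlt | hKL
      · obtain ⟨c, hc⟩ := (Subobject.mk_factors_iff f _).mp <|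
          (pullback_factors_iff _ _ (𝟙 P)).mp (hK.2 L hlt ▸ Subobject.top_factors _)
        rw [Category.id_comp] at hc
        have : Epi f := epi_of_epi_fac hc
        exact isIso_of_mono_of_epi f
      · -- `L = K`, so `f` vanishes after the epimorphism `pullback.snd`
        have hfst : L.Factors (pullback.fst (cokernel.π K.arrow) f) :=
          pullback_factors _ _ _ <| (Subobject.mk_factors_iff f _).mpr
            ⟨_, pullback.condition.symm⟩
        have hzero := comp_cokernel_π_eq_zero_of_factors (hKL.symm ▸ hfst)
        rw [pullback.condition] at hzero
        exact absurd (zero_of_epi_comp _ hzero) hf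

theorem exists_simple_quotient_of_ne_zero [WellFoundedGT (Subobject P)] {Y : C} {f : P ⟶ Y}
    (hf : f ≠ 0) : ∃ (X : C) (_ : Simple X) (ρ : P ⟶ X), ρ ≠ 0 ∧ kernel.ι f ≫ ρ = 0 := by
  have hker : kernelSubobject f ≠ ⊤ := fun htop => by
    have := (Subobject.isIso_arrow_iff_eq_top _).mpr htop
    exact hf (zero_of_epi_comp _ (kernelSubobject_arrow_comp f))
  obtain ⟨K, hK, hle⟩ := (eq_top_or_exists_le_coatom (kernelSubobject f)).resolve_left hker
  exact ⟨_, simple_cokernel_of_isCoatom hK, cokernel.π K.arrow, cokernel_π_ne_zero_of_ne_top hK.1,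
    comp_cokernel_π_eq_zero_of_factors <|
      Subobject.factors_of_le _ hle (kernelSubobject_factors f _ (kernel.condition f))⟩

theorem Projective.comp_cokernel_π_eq_zero_iff [Projective P] {Y Z : C} {q : Y ⟶ Z}
    {a : P ⟶ Z} : a ≫ cokernel.π q = 0 ↔ ∃ b : P ⟶ Y, b ≫ q = a := by
  refine ⟨fun ha => ?_, fun ⟨b, hb⟩ => by rw [← hb, Category.assoc, cokernel.condition, comp_zero]⟩
  have hlift := Projective.factorThru_comp (kernel.lift _ a ha) (Abelian.factorThruImage q)
  refine ⟨Projective.factorThru (kernel.lift _ a ha) (Abelian.factorThruImage q), ?_⟩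
  calc _ = Projective.factorThru (kernel.lift _ a ha) (Abelian.factorThruImage q) ≫
        Abelian.factorThruImage q ≫ Abelian.image.ι q := by rw [Abelian.image.fac]
    _ = a := by rw [← Category.assoc, hlift, kernel.lift_ι]

attribute [local instance] Abelian.hasFiniteBiproducts

theorem exists_comp_biproduct_desc_iff {ι : Type} [Fintype ι] (s : ι → (End P)ᵐᵒᵖ)
    (a : End P) :
    (∃ b : P ⟶ ⨁ fun _ : ι => P, b ≫ biproduct.desc (fun i => (s i).unop) = a) ↔
      op a ∈ Submodule.span (End P)ᵐᵒᵖ (Set.range s) := by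
  have hsum (c : ι → (End P)ᵐᵒᵖ) : ∑ i, c i • s i = op (∑ i, (c i).unop ≫ (s i).unop) := by
    simp only [Finset.op_sum]; rfl
  simp_rw [Submodule.mem_span_range_iff_exists_fun, hsum, op_inj]
  constructor
  · rintro ⟨b, rfl⟩
    refine ⟨fun i => op (b ≫ biproduct.π _ i), ?_⟩
    simp [biproduct.desc_eq, Preadditive.comp_sum]
  · rintro ⟨c, rfl⟩
    exact ⟨biproduct.lift fun i => (c i).unop, biproduct.lift_desc⟩

theorem torsionOf_cokernel_π_biproduct_desc [Projective P] {ι : Type} [Fintype ι]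
    (s : ι → (End P)ᵐᵒᵖ) :
    Ideal.torsionOf (End P)ᵐᵒᵖ _ (cokernel.π (biproduct.desc fun i => (s i).unop)) =
      Submodule.span (End P)ᵐᵒᵖ (Set.range s) := by
  ext a
  rw [mem_torsionOf_iff_comp_eq_zero, Projective.comp_cokernel_π_eq_zero_iff,
    exists_comp_biproduct_desc_iff, op_unop]

theorem exists_simple_linearEquiv_quotient [Projective P] [WellFoundedGT (Subobject P)]
    [IsNoetherianRing (End P)ᵐᵒᵖ] {I : Ideal (End P)ᵐᵒᵖ} (hI : I.IsMaximal) :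
    ∃ (X : C) (_ : Simple X) (ρ : P ⟶ X), ρ ≠ 0 ∧
      Nonempty ((P ⟶ X) ≃ₗ[(End P)ᵐᵒᵖ] (End P)ᵐᵒᵖ ⧸ I) := by
  obtain ⟨n, s, hs⟩ := Submodule.fg_iff_exists_fin_generating_family.mp (IsNoetherian.noetherian I)
  set f := cokernel.π (biproduct.desc fun i => (s i).unop)
  have hfI : Ideal.torsionOf _ _ f = I := (torsionOf_cokernel_π_biproduct_desc s).trans hs
  have hf : f ≠ 0 := fun h => hI.ne_top (by rw [← hfI, h, Ideal.torsionOf_zero])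
  obtain ⟨X, _, ρ, hρ, hfρ⟩ := exists_simple_quotient_of_ne_zero hf
  have : Epi ρ := epi_of_nonzero_to_simple hρ
  have hle : I ≤ Ideal.torsionOf (End P)ᵐᵒᵖ (P ⟶ X) ρ := by
    rw [← hfI]
    intro a ha
    rw [mem_torsionOf_iff_comp_eq_zero] at ha ⊢
    rw [← kernel.lift_ι f _ ha, Category.assoc, hfρ, comp_zero]
  have hρI : Ideal.torsionOf _ _ ρ = I :=
    (hI.eq_of_le ((Ideal.torsionOf_eq_top_iff _ _).not.mpr hρ) hle).symm
  exact ⟨X, ‹_›, ρ, hρ, ⟨(homLinearEquivQuotTorsionOf ρ).trans (Submodule.quotEquivOfEq _ _ hρI)⟩⟩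

end

/-- Let `C` be an abelian category, `P` a noetherian projective object of `C`,
and `A = End_C(P)`; assume `A` is right noetherian.  Then the assignment `X ↦ Hom_C(P, X)`
induces a bijection from the set of isomorphism classes of simple objects `X` of `C` satisfying
`Hom_C(P, X) ≠ 0` onto the set of isomorphism classes of simple right `A`-modules.
(In particular, `Hom_C(P, X)` is a simple right `A`-module for every such `X`, and the induced
map `b` on isomorphism classes sends the class of `X` to the class of `Hom_C(P, X)`.) -/
theorem stmt6 (P : C) [Projective P] [WellFoundedGT (Subobject P)]
    [IsNoetherianRing (End P)ᵐᵒᵖ] :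
    (∀ X : SimpleObjsWithHom P, IsSimpleModule (End P)ᵐᵒᵖ (P ⟶ X.1)) ∧
    ∃ b : Quotient (simpleObjsSetoid P) → Quotient (simpleRightModsSetoid P),
      Function.Bijective b ∧
      ∀ (X : SimpleObjsWithHom P) (N : SimpleRightMods P),
        Nonempty ((P ⟶ X.1) ≃ₗ[(End P)ᵐᵒᵖ] N.1) →
          b (Quotient.mk (simpleObjsSetoid P) X) = Quotient.mk (simpleRightModsSetoid P) N := by
  have hsimple (X : SimpleObjsWithHom P) : IsSimpleModule (End P)ᵐᵒᵖ (P ⟶ X.1) :=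
    have := X.2.1
    isSimpleModule_hom_of_ne_zero X.2.2.choose_spec
  let b : Quotient (simpleObjsSetoid P) → Quotient (simpleRightModsSetoid P) :=
    Quotient.map (fun X => ⟨ModuleCat.of _ (P ⟶ X.1), hsimple X⟩)
      fun _ _ ⟨e⟩ => ⟨((preadditiveCoyonedaObj P).mapIso e).toLinearEquiv⟩
  refine ⟨hsimple, b, ⟨?_, ?_⟩, fun X N ⟨e⟩ => Quotient.sound ⟨e⟩⟩
  · rintro ⟨X⟩ ⟨Y⟩ h
    obtain ⟨e⟩ := Quotient.exact h
    have := X.2.1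
    have := Y.2.1
    exact Quotient.sound (nonempty_iso_of_linearEquiv X.2.2.choose_spec e)
  · rintro ⟨N⟩
    obtain ⟨I, hI, ⟨e⟩⟩ := isSimpleModule_iff_quot_maximal.mp N.2
    obtain ⟨X, hX, ρ, hρ, ⟨e'⟩⟩ := exists_simple_linearEquiv_quotient hI
    exact ⟨⟦⟨X, hX, ρ, hρ⟩⟧, Quotient.sound ⟨e'.trans e.symm⟩⟩
end
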